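/- Let n_1, n_2 be positive integers with n_1 ≤ n_2 and n_1 odd. Then there exists an arrangement A of the n_1 × n_2 matrix with spread(A) = (n_1+1)n_2/2 − 1. -/

import Mathlib

/-- The spread of an arrangement of an `n₁ × n₂` matrix (a bijection from cells
to `{0,…,n₁n₂ − 1}`, a zero-based version of `{1,…,n₁n₂}`): the maximum
difference of values over all pairs of cells in a common row or column. -/
def spread2 {n₁ n₂ : ℕ} (A : Fin n₁ × Fin n₂ ≃ Fin (n₁ * n₂)) : ℕ :=
  Finset.sup Finset.univ
    (fun p : (Fin n₁ × Fin n₂) × (Fin n₁ × Fin n₂) =>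
      if p.1.1 = p.2.1 ∨ p.1.2 = p.2.2 then Nat.dist (A p.1) (A p.2) else 0)

/-
Write `n₁ = 2m + 1`, so that the target spread is `(m + 1) n₂ - 1`.

For `n₂ = 2h`, number the left halves of the rows in row-major order and then the right halves:
row `l` occupies `[lh, lh + h)` and `[n₁h + lh, n₁h + lh + h)`, so every row spans exactly
`(n₁ + 1)h - 1` while a column spans only `(n₁ - 1)h`.

For `n₂ = 2h + 1`, insert the last column into this arrangement of the first `2h` columns: its
top `m + 1` entries fill a gap opened right after the top-left `m × h` block, its bottom `m`
entries a gap opened `m` places before the end of the middle row. No row contains more than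
`m + 1` of the inserted values in its range, and `m ≤ h` keeps the last column's span at
`(m + 1)(2h + 1) - 1`.
-/

open Function Set

section Spread

variable {n₁ n₂ : ℕ} (A : Fin n₁ × Fin n₂ ≃ Fin (n₁ * n₂))

theorem dist_le_spread2 {x y : Fin n₁ × Fin n₂} (hxy : x.1 = y.1 ∨ x.2 = y.2) :
    Nat.dist (A x) (A y) ≤ spread2 A := by
  have := Finset.le_sup (f := fun p : (Fin n₁ × Fin n₂) × (Fin n₁ × Fin n₂) =>
    if p.1.1 = p.2.1 ∨ p.1.2 = p.2.2 then Nat.dist (A p.1) (A p.2) else 0) (Finset.mem_univ (x, y))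
  rw [if_pos hxy] at this
  exact this

theorem spread2_le {S : ℕ}
    (h : ∀ x y : Fin n₁ × Fin n₂, x.1 = y.1 ∨ x.2 = y.2 → Nat.dist (A x) (A y) ≤ S) :
    spread2 A ≤ S :=
  Finset.sup_le fun p _ => by
    split_ifs with hp
    exacts [h _ _ hp, Nat.zero_le S]

end Spread

theorem Nat.dist_le_of_mem_Icc {a b r S : ℕ} (ha : a ∈ Icc r (r + S)) (hb : b ∈ Icc r (r + S)) :
    Nat.dist a b ≤ S := by
  simp only [mem_Icc] at ha hb
  simp only [Nat.dist]
  omega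

theorem Nat.mul_add_le_mul_of_lt {l n h : ℕ} (hl : l < n) : l * h + h ≤ n * h :=
  (Nat.succ_mul l h).symm.trans_le (Nat.mul_le_mul_right h hl)

theorem Nat.eq_and_eq_of_mul_add_eq_mul_add {h l l' j j' : ℕ} (hj : j < h) (hj' : j' < h)
    (he : l * h + j = l' * h + j') : l = l' ∧ j = j' := by
  have hh : 0 < h := by omega
  have div_mod {l j : ℕ} (hj : j < h) : (l * h + j) / h = l ∧ (l * h + j) % h = j :=
    (Nat.div_mod_unique hh).2 ⟨by ring, hj⟩
  obtain ⟨hl, hjj⟩ := div_mod (l := l) hj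
  obtain ⟨hl', hjj'⟩ := div_mod (l := l') hj'
  rw [he] at hl hjj
  exact ⟨hl.symm.trans hl', hjj.symm.trans hjj'⟩

theorem exists_spread2_eq_of_windows {n₁ n₂ : ℕ} (f : ℕ → ℕ → ℕ) (S : ℕ) (r c : ℕ → ℕ)
    (hlt : ∀ l < n₁, ∀ j < n₂, f l j < n₁ * n₂)
    (hinj : InjOn (uncurry f) (Iio n₁ ×ˢ Iio n₂))
    (hrow : ∀ l < n₁, ∀ j < n₂, f l j ∈ Icc (r l) (r l + S))
    (hcol : ∀ l < n₁, ∀ j < n₂, f l j ∈ Icc (c j) (c j + S))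
    {l₀ j₀ j₁ : ℕ} (hl₀ : l₀ < n₁) (hj₀ : j₀ < n₂) (hj₁ : j₁ < n₂)
    (hS : Nat.dist (f l₀ j₀) (f l₀ j₁) = S) :
    ∃ A : Fin n₁ × Fin n₂ ≃ Fin (n₁ * n₂), spread2 A = S := by
  let F : Fin n₁ × Fin n₂ → Fin (n₁ * n₂) := fun x => ⟨f x.1 x.2, hlt _ x.1.2 _ x.2.2⟩
  have hF : Injective F := fun x y hxy => by
    have := @hinj ((x.1 : ℕ), (x.2 : ℕ)) ⟨x.1.2, x.2.2⟩ ((y.1 : ℕ), (y.2 : ℕ)) ⟨y.1.2, y.2.2⟩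
      (congrArg Fin.val hxy)
    simp only [Prod.mk.injEq] at this
    exact Prod.ext (Fin.ext this.1) (Fin.ext this.2)
  let A := Equiv.ofBijective F ((Fintype.bijective_iff_injective_and_card F).2 ⟨hF, by simp⟩)
  refine ⟨A, le_antisymm (spread2_le A ?_) (hS ▸ dist_le_spread2 A
    (x := (⟨l₀, hl₀⟩, ⟨j₀, hj₀⟩)) (y := (⟨l₀, hl₀⟩, ⟨j₁, hj₁⟩)) (Or.inl rfl))⟩
  rintro ⟨⟨l, hl⟩, ⟨j, hj⟩⟩ ⟨⟨l', hl'⟩, ⟨j', hj'⟩⟩ (h | h) <;> cases h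
  · exact Nat.dist_le_of_mem_Icc (hrow l hl j hj) (hrow l hl j' hj')
  · exact Nat.dist_le_of_mem_Icc (hcol l hl j hj) (hcol l' hl' j hj)

def evenColsArrangement (n₁ h l j : ℕ) : ℕ :=
  if j < h then l * h + j else n₁ * h + (l * h + (j - h))

section EvenCols

variable {n₁ h : ℕ}

theorem evenColsArrangement_lt {l j : ℕ} (hl : l < n₁) (hj : j < 2 * h) :
    evenColsArrangement n₁ h l j < n₁ * (2 * h) := by
  have := Nat.mul_add_le_mul_of_lt (h := h) hl
  have : n₁ * (2 * h) = 2 * (n₁ * h) := by ring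
  unfold evenColsArrangement
  split_ifs <;> omega

theorem evenColsArrangement_injOn :
    InjOn (uncurry (evenColsArrangement n₁ h)) (Iio n₁ ×ˢ Iio (2 * h)) := by
  rintro ⟨l, j⟩ ⟨hl, hj⟩ ⟨l', j'⟩ ⟨hl', hj'⟩ he
  simp only [mem_Iio, uncurry_apply_pair, evenColsArrangement] at hl hj hl' hj' he
  have := Nat.mul_add_le_mul_of_lt (h := h) hl
  have := Nat.mul_add_le_mul_of_lt (h := h) hl'
  rw [Prod.mk.injEq]
  split_ifs at he with hjh hjh'
  · exact Nat.eq_and_eq_of_mul_add_eq_mul_add hjh hjh' he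
  · omega
  · omega
  · have := Nat.eq_and_eq_of_mul_add_eq_mul_add (h := h) (l := l) (l' := l') (j := j - h)
      (j' := j' - h) (by omega) (by omega) (by omega)
    omega

theorem evenColsArrangement_mem_row {l j : ℕ} (hj : j < 2 * h) :
    evenColsArrangement n₁ h l j ∈ Icc (l * h) (l * h + ((n₁ + 1) * h - 1)) := by
  have : (n₁ + 1) * h = n₁ * h + h := by ring
  unfold evenColsArrangement
  split_ifs <;> constructor <;> omega

theorem evenColsArrangement_mem_col {l j : ℕ} (hl : l < n₁) (hj : j < 2 * h) :
    evenColsArrangement n₁ h l j ∈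
      Icc (evenColsArrangement n₁ h 0 j) (evenColsArrangement n₁ h 0 j + ((n₁ + 1) * h - 1)) := by
  have := Nat.mul_add_le_mul_of_lt (h := h) hl
  have : (n₁ + 1) * h = n₁ * h + h := by ring
  unfold evenColsArrangement
  split_ifs <;> constructor <;> omega

theorem exists_spread2_eq_evenCols (hn₁ : 0 < n₁) (hh : 0 < h) :
    ∃ A : Fin n₁ × Fin (2 * h) ≃ Fin (n₁ * (2 * h)), spread2 A = (n₁ + 1) * h - 1 := by
  refine exists_spread2_eq_of_windows (evenColsArrangement n₁ h) _ (· * h)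
    (evenColsArrangement n₁ h 0) (fun _ hl _ hj => evenColsArrangement_lt hl hj)
    evenColsArrangement_injOn (fun _ _ _ hj => evenColsArrangement_mem_row hj)
    (fun _ hl _ hj => evenColsArrangement_mem_col hl hj) hn₁ (j₀ := 0) (j₁ := 2 * h - 1)
    (by omega) (by omega) ?_
  have : (n₁ + 1) * h = n₁ * h + h := by ring
  simp only [evenColsArrangement, Nat.dist]
  split_ifs <;> omega

end EvenCols

/- Opens a gap of `m + 1` values at `mh` and a gap of `m` values at `(3m + 2)h - m`, which is `m`
places before the end of the middle row `m` of `evenColsArrangement (2m + 1) h`; `lastCol` fills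
both gaps. -/
def gapShift (m h v : ℕ) : ℕ :=
  v + (if m * h ≤ v then m + 1 else 0) + (if 3 * (m * h) + 2 * h - m ≤ v then m else 0)

def lastCol (m h l : ℕ) : ℕ :=
  if l ≤ m then m * h + l else 3 * (m * h) + 2 * h - m + l

def oddColsArrangement (m h l j : ℕ) : ℕ :=
  if j < 2 * h then gapShift m h (evenColsArrangement (2 * m + 1) h l j) else lastCol m h l

def oddColsRowMin (m h l : ℕ) : ℕ :=
  if l < m then l * h else if l = m then m * h + m else l * h + m + 1

theorem add_one_mul_two_mul_add_one_sub_one (m h : ℕ) :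
    (m + 1) * (2 * h + 1) - 1 = 2 * (m * h) + 2 * h + m := by
  have : (m + 1) * (2 * h + 1) = 2 * (m * h) + 2 * h + m + 1 := by ring
  omega

section OddCols

variable {m h : ℕ}

theorem gapShift_strictMono : StrictMono (gapShift m h) := by
  intro v w hvw
  simp only [gapShift]
  split_ifs <;> omega

theorem gapShift_ne_lastCol (hmh : m ≤ h) (v : ℕ) {l : ℕ} (hl : l < 2 * m + 1) :
    gapShift m h v ≠ lastCol m h l := by
  simp only [gapShift, lastCol]
  split_ifs <;> omega

theorem lastCol_strictMono (hmh : m ≤ h) : StrictMono (lastCol m h) := by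
  intro l l' hll'
  simp only [lastCol]
  split_ifs <;> omega

theorem oddColsArrangement_lt {l : ℕ} (j : ℕ) (hl : l < 2 * m + 1) :
    oddColsArrangement m h l j < (2 * m + 1) * (2 * h + 1) := by
  have := Nat.mul_add_le_mul_of_lt (h := h) hl
  have : (2 * m + 1) * (2 * h + 1) = 4 * (m * h) + 2 * h + 2 * m + 1 := by ring
  have : (2 * m + 1) * h = 2 * (m * h) + h := by ring
  simp only [oddColsArrangement, gapShift, lastCol, evenColsArrangement]
  split_ifs <;> omega

theorem oddColsArrangement_injOn (hmh : m ≤ h) :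
    InjOn (uncurry (oddColsArrangement m h)) (Iio (2 * m + 1) ×ˢ Iio (2 * h + 1)) := by
  rintro ⟨l, j⟩ ⟨hl, hj⟩ ⟨l', j'⟩ ⟨hl', hj'⟩ he
  simp only [mem_Iio, uncurry_apply_pair, oddColsArrangement] at hl hj hl' hj' he
  split_ifs at he with hj₁ hj₁'
  · exact evenColsArrangement_injOn (mk_mem_prod hl hj₁) (mk_mem_prod hl' hj₁')
      (gapShift_strictMono.injective he)
  · exact (gapShift_ne_lastCol hmh _ hl' he).elim
  · exact (gapShift_ne_lastCol hmh _ hl he.symm).elim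
  · rw [(lastCol_strictMono hmh).injective he, show j = j' by omega]

theorem oddColsArrangement_mem_row (hmh : m ≤ h) {l : ℕ} (j : ℕ) (hl : l < 2 * m + 1) :
    oddColsArrangement m h l j ∈
      Icc (oddColsRowMin m h l) (oddColsRowMin m h l + ((m + 1) * (2 * h + 1) - 1)) := by
  rw [add_one_mul_two_mul_add_one_sub_one]
  have := Nat.mul_add_le_mul_of_lt (h := h) hl
  have : (2 * m + 1) * h = 2 * (m * h) + h := by ring
  simp only [oddColsRowMin, oddColsArrangement, gapShift, lastCol, evenColsArrangement]
  rcases lt_trichotomy l m with hlm | rfl | hlm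
  · have := Nat.mul_add_le_mul_of_lt (h := h) hlm
    split_ifs <;> constructor <;> omega
  · split_ifs <;> constructor <;> omega
  · have := Nat.mul_add_le_mul_of_lt (h := h) hlm
    split_ifs <;> constructor <;> omega

theorem oddColsArrangement_mem_col (hmh : m ≤ h) {l : ℕ} (j : ℕ) (hl : l < 2 * m + 1) :
    oddColsArrangement m h l j ∈ Icc (oddColsArrangement m h 0 j)
      (oddColsArrangement m h 0 j + ((m + 1) * (2 * h + 1) - 1)) := by
  rw [add_one_mul_two_mul_add_one_sub_one]
  have := Nat.mul_add_le_mul_of_lt (h := h) hl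
  have : (2 * m + 1) * h = 2 * (m * h) + h := by ring
  simp only [oddColsArrangement, gapShift, lastCol, evenColsArrangement]
  split_ifs <;> constructor <;> omega

theorem exists_spread2_eq_oddCols (hmh : m ≤ h) :
    ∃ A : Fin (2 * m + 1) × Fin (2 * h + 1) ≃ Fin ((2 * m + 1) * (2 * h + 1)),
      spread2 A = (m + 1) * (2 * h + 1) - 1 := by
  refine exists_spread2_eq_of_windows (oddColsArrangement m h) _ (oddColsRowMin m h)
    (oddColsArrangement m h 0) (fun _ hl j _ => oddColsArrangement_lt j hl)
    (oddColsArrangement_injOn hmh) (fun _ hl j _ => oddColsArrangement_mem_row hmh j hl)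
    (fun _ hl j _ => oddColsArrangement_mem_col hmh j hl) (l₀ := m) (j₀ := 2 * h)
    (j₁ := 2 * h - 1) (by omega) (by omega) (by omega) ?_
  rw [add_one_mul_two_mul_add_one_sub_one]
  have : (2 * m + 1) * h = 2 * (m * h) + h := by ring
  have : h = 0 → m * h = 0 := fun h0 => by rw [h0, mul_zero]
  simp only [oddColsArrangement, gapShift, lastCol, evenColsArrangement, Nat.dist]
  split_ifs <;> omega

end OddCols

theorem exists_spread2_odd_general (n₁ n₂ : ℕ)
    (hle : n₁ ≤ n₂) (hodd : Odd n₁) :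
    ∃ A : Fin n₁ × Fin n₂ ≃ Fin (n₁ * n₂),
      spread2 A = (n₁ + 1) * n₂ / 2 - 1 := by
  obtain ⟨m, rfl⟩ := hodd
  have hS : (2 * m + 1 + 1) * n₂ / 2 = (m + 1) * n₂ := by
    rw [show (2 * m + 1 + 1) * n₂ = 2 * ((m + 1) * n₂) by ring, Nat.mul_div_cancel_left _ two_pos]
  rw [hS]
  obtain ⟨h, rfl | rfl⟩ := Nat.even_or_odd' n₂
  · obtain ⟨A, hA⟩ := exists_spread2_eq_evenCols (n₁ := 2 * m + 1) (h := h) (by omega) (by omega)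
    exact ⟨A, hA.trans (by ring_nf)⟩
  · exact exists_spread2_eq_oddCols (by omega)

/-- If `n₁ ≤ n₂` and `n₁` is odd, there is an arrangement of the `n₁ × n₂`
matrix achieving spread exactly `(n₁+1)n₂/2 − 1`. -/
theorem exists_spread2_odd (n₁ n₂ : ℕ) (h₁ : 1 ≤ n₁) (h₂ : 1 ≤ n₂)
    (hle : n₁ ≤ n₂) (hodd : Odd n₁) :
    ∃ A : Fin n₁ × Fin n₂ ≃ Fin (n₁ * n₂),
      spread2 A = (n₁ + 1) * n₂ / 2 - 1 :=
  exists_spread2_odd_general n₁ n₂ hle hodd
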